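/- arXiv:1507.02608 — 2 statements merged into one kernel-verified Lean document; each statement's English description precedes it below -/
import Mathlib

section
/- If a DAG H satisfies one of the following: (a) the skeleton of G is not contained in the skeleton of H, (b) there is a triple (X_i, X_j, X_k) with X_i, X_k non-adjacent in H, (X_i, X_j, X_k) a non-collider path in H and a v-structure in G, or (c) there is a v-structure (X_i, X_j, X_k) in H with X_i a non-descendant of X_k in H and X_i d-connected to X_k given Pa_H(X_k) in G — then H is not an independence map of G. (The 'if' direction of the characterization of independence maps.) -/
/-- A directed acyclic graph on vertex set `Fin p`, given by its edge relation. -/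
structure DAG (p : ℕ) where
  E : Fin p → Fin p → Prop
  acyclic : ∀ i, ¬ Relation.TransGen E i i

namespace DAG

variable {p : ℕ}

/-- `i` and `j` are adjacent. -/
def adj (G : DAG p) (i j : Fin p) : Prop := G.E i j ∨ G.E j i

/-- `j` is a descendant of `i` (each node is a descendant of itself). -/
def desc (G : DAG p) (i j : Fin p) : Prop := Relation.ReflTransGen G.E i j

/-- The set of non-descendants of `k`. -/
def nd (G : DAG p) (k : Fin p) : Set (Fin p) := {i | ¬ G.desc k i}

/-- The set of parents of `k`. -/
def pa (G : DAG p) (k : Fin p) : Set (Fin p) := {i | G.E i k}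

/-- `b` is a collider between `a` and `c` (on a path `a - b - c`). -/
def collider (G : DAG p) (a b c : Fin p) : Prop := G.E a b ∧ G.E c b

/-- `l` is a path from `i` to `k` in `G`: a list of pairwise distinct vertices, consecutive
vertices adjacent, starting at `i` and ending at `k`, with at least two vertices. -/
def IsPathList (G : DAG p) (l : List (Fin p)) (i k : Fin p) : Prop :=
  l.Nodup ∧ l.Chain' G.adj ∧ l.head? = some i ∧ l.getLast? = some k ∧ 2 ≤ l.length

/-- The set `S` blocks the path `l`: some non-endpoint vertex of `l` is a non-collider in `S`,
or a collider having no descendant in `S`. -/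
def blocked (G : DAG p) (S : Set (Fin p)) (l : List (Fin p)) : Prop :=
  ∃ (n : ℕ) (h : n + 2 < l.length),
    (G.collider (l.get ⟨n, by omega⟩) (l.get ⟨n + 1, by omega⟩) (l.get ⟨n + 2, h⟩) ∧
      ¬ ∃ d ∈ S, G.desc (l.get ⟨n + 1, by omega⟩) d) ∨
    (¬ G.collider (l.get ⟨n, by omega⟩) (l.get ⟨n + 1, by omega⟩) (l.get ⟨n + 2, h⟩) ∧
      l.get ⟨n + 1, by omega⟩ ∈ S)

/-- `i` and `k` are d-connected given `S` in `G`. -/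
def dConn (G : DAG p) (i k : Fin p) (S : Set (Fin p)) : Prop :=
  ∃ l, G.IsPathList l i k ∧ ¬ G.blocked S l

/-- `i` and `k` are d-separated by `S` in `G`. -/
def dSep (G : DAG p) (i k : Fin p) (S : Set (Fin p)) : Prop := ¬ G.dConn i k S

/-- The node sets `W₁` and `W₂` are d-separated by `S` in `G`. -/
def dSepSet (G : DAG p) (W₁ W₂ S : Set (Fin p)) : Prop :=
  ∀ i ∈ W₁, ∀ k ∈ W₂, G.dSep i k S

/-- `H` is an independence map of `G`: every conditional independence constraint
(d-separation statement) encoded by `H` is also encoded by `G`. -/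
def IndepMap (H G : DAG p) : Prop :=
  ∀ W₁ W₂ S : Set (Fin p), Disjoint W₁ W₂ → Disjoint W₁ S → Disjoint W₂ S →
    H.dSepSet W₁ W₂ S → G.dSepSet W₁ W₂ S

/-- The skeleton of `G` is a subgraph of the skeleton of `H`. -/
def skeletonSub (G H : DAG p) : Prop := ∀ i j, G.adj i j → H.adj i j

/-- `(i, j, k)` is a v-structure: `i → j ← k` with `i` and `k` non-adjacent. -/
def vstruct (G : DAG p) (i j k : Fin p) : Prop :=
  G.E i j ∧ G.E k j ∧ ¬ G.adj i k ∧ i ≠ k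

/-- `(i, j, k)` is a non-collider path of three (distinct) nodes in `H`. -/
def nonColliderTriple (H : DAG p) (i j k : Fin p) : Prop :=
  H.adj i j ∧ H.adj j k ∧ i ≠ k ∧ i ≠ j ∧ j ≠ k ∧ ¬ H.collider i j k

end DAG

namespace DAG

variable {p : ℕ}

lemma E_ne {G : DAG p} {i j : Fin p} (h : G.E i j) : i ≠ j := by
  rintro rfl; exact G.acyclic i (Relation.TransGen.single h)

lemma desc_antisymm {G : DAG p} {i j : Fin p} (h1 : G.desc i j) (h2 : G.desc j i) : i = j := by
  by_contra hne
  rcases Relation.reflTransGen_iff_eq_or_transGen.mp h1 with rfl | h1'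
  · exact hne rfl
  rcases Relation.reflTransGen_iff_eq_or_transGen.mp h2 with rfl | h2'
  · exact hne rfl
  exact G.acyclic i (h1'.trans h2')

/-- Local Markov property: a node is d-separated from its non-parent non-descendants
given its parents. -/
lemma local_markov (H : DAG p) {i k : Fin p} (hadj : ¬ H.adj i k) (hnd : ¬ H.desc k i) :
    H.dSep i k (H.pa k) := by
  rintro ⟨l, ⟨hnodup, hchain, hhead, hlast, hlen⟩, hnb⟩
  set m := l.length with hm
  set v : ℕ → Fin p := fun n => l.getD n i with hvdef
  have hv : ∀ (n : ℕ) (h : n < m), l.get ⟨n, h⟩ = v n := by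
    intro n h
    rw [List.get_eq_getElem]
    exact (List.getD_eq_getElem l i h).symm
  have hv0 : v 0 = i := by
    rw [List.head?_eq_getElem?] at hhead
    have h0 : 0 < m := by omega
    rw [List.getElem?_eq_getElem h0] at hhead
    have := Option.some_injective _ hhead
    rw [← hv 0 h0]; exact this
  have hvlast : v (m - 1) = k := by
    rw [List.getLast?_eq_getElem?] at hlast
    have h0 : m - 1 < m := by omega
    rw [List.getElem?_eq_getElem h0] at hlast
    have := Option.some_injective _ hlast
    rw [← hv (m-1) h0]; exact this
  have hchain2 : ∀ n, n + 1 < m → H.adj (v n) (v (n + 1)) := by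
    intro n h
    have := List.isChain_iff_getElem.mp hchain n (by omega)
    have h1 : l[n] = v n := hv n (by omega)
    have h2 : l[n+1] = v (n+1) := hv (n+1) (by omega)
    rwa [h1, h2] at this
  have hnb2 : ∀ n, n + 2 < m →
      (H.collider (v n) (v (n+1)) (v (n+2)) → ∃ d ∈ H.pa k, H.desc (v (n+1)) d) ∧
      (¬ H.collider (v n) (v (n+1)) (v (n+2)) → v (n+1) ∉ H.pa k) := by
    intro n h
    constructor
    · intro hc
      by_contra hcon
      push_neg at hcon
      refine hnb ⟨n, h, Or.inl ?_⟩
      rw [hv n (by omega), hv (n+1) (by omega), hv (n+2) h]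
      refine ⟨hc, ?_⟩
      push_neg
      exact hcon
    · intro hc hmem
      refine hnb ⟨n, h, Or.inr ?_⟩
      rw [hv n (by omega), hv (n+1) (by omega), hv (n+2) h]
      exact ⟨hc, hmem⟩
  -- case analysis on the last edge
  have hlastadj : H.adj (v (m - 2)) (v (m - 1)) := by
    have := hchain2 (m - 2) (by omega)
    have e : m - 2 + 1 = m - 1 := by omega
    rwa [e] at this
  rw [hvlast] at hlastadj
  rcases hlastadj with hin | hout
  · -- E (v (m-2)) k
    by_cases hm2 : m = 2
    · have : v (m - 2) = i := by rw [show m - 2 = 0 by omega, hv0]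
      rw [this] at hin
      exact hadj (Or.inl hin)
    · have hm3 : 3 ≤ m := by omega
      have hnc : ¬ H.collider (v (m-3)) (v (m-3+1)) (v (m-3+2)) := by
        rintro ⟨-, hc2⟩
        rw [show m - 3 + 2 = m - 1 by omega, hvlast, show m - 3 + 1 = m - 2 by omega] at hc2
        exact H.acyclic k ((Relation.TransGen.single hc2).tail hin)
      have := (hnb2 (m-3) (by omega)).2 hnc
      rw [show m - 3 + 1 = m - 2 by omega] at this
      exact this hin
  · -- E k (v (m-2)) : trace back
    have hQlast : ∀ s, m - 2 ≤ s → s + 1 ≤ m - 1 → H.E (v (s+1)) (v s) := by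
      intro s hs hs'
      have : s = m - 2 := by omega
      subst this
      rwa [show m - 2 + 1 = m - 1 by omega, hvlast]
    -- descent lemma
    have hdesc : ∀ d t, t + d = m - 1 →
        (∀ s, t ≤ s → s + 1 ≤ m - 1 → H.E (v (s+1)) (v s)) → H.desc k (v t) := by
      intro d
      induction d with
      | zero =>
        intro t ht _
        rw [show t = m - 1 by omega, hvlast]
        exact Relation.ReflTransGen.refl
      | succ d ih =>
        intro t ht hQ
        have h1 : H.desc k (v (t+1)) := ih (t+1) (by omega) (fun s hs hs' => hQ s (by omega) hs')
        exact h1.tail (hQ t le_rfl (by omega))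
    have main : ∀ t, t ≤ m - 2 →
        (∀ s, t ≤ s → s + 1 ≤ m - 1 → H.E (v (s+1)) (v s)) → False := by
      intro t
      induction t with
      | zero =>
        intro _ hQ
        exact hnd (by rw [← hv0]; exact hdesc (m-1) 0 (by omega) hQ)
      | succ t ih =>
        intro ht hQ
        by_cases he : H.E (v (t+1)) (v t)
        · exact ih (by omega) (fun s hs hs' => by
            rcases Nat.eq_or_lt_of_le hs with rfl | hlt
            · exact he
            · exact hQ s (by omega) hs')
        · have hfwd : H.E (v t) (v (t+1)) := by
            rcases hchain2 t (by omega) with h | h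
            · exact h
            · exact absurd h he
          have hback : H.E (v (t+2)) (v (t+1)) := by
            have := hQ (t+1) le_rfl (by omega)
            rwa [show t + 1 + 1 = t + 2 by omega] at this
          have hcol : H.collider (v t) (v (t+1)) (v (t+2)) := ⟨hfwd, hback⟩
          obtain ⟨d, hdpa, hdd⟩ := (hnb2 t (by omega)).1 hcol
          have hk1 : H.desc k (v (t+1)) := hdesc (m - 1 - (t+1)) (t+1) (by omega) hQ
          exact H.acyclic k (Relation.TransGen.tail' (hk1.trans hdd) hdpa)
    exact main (m-2) le_rfl hQlast

lemma dConn_edge (G : DAG p) {i j : Fin p} (S : Set (Fin p)) (h : G.adj i j) (hne : i ≠ j) :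
    G.dConn i j S := by
  refine ⟨[i, j], ⟨by simp [hne], by simp [List.Chain', h], rfl, rfl, by simp⟩, ?_⟩
  rintro ⟨n, hn, -⟩
  simp at hn

lemma dConn_collider (G : DAG p) {i j k : Fin p} {S : Set (Fin p)}
    (hij : G.E i j) (hkj : G.E k j) (hik : i ≠ k) (hjS : j ∈ S) : G.dConn i k S := by
  have hij' : i ≠ j := E_ne hij
  have hkj' : k ≠ j := E_ne hkj
  refine ⟨[i, j, k], ⟨by simp [hij', hkj'.symm, hik], by simp [List.Chain', adj, hij, hkj], rfl, rfl,
    by simp⟩, ?_⟩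
  rintro ⟨n, hn, hb⟩
  simp only [List.length_cons, List.length_nil] at hn
  have hn0 : n = 0 := by omega
  subst hn0
  simp only [List.get] at hb
  rcases hb with ⟨-, hno⟩ | ⟨hnc, -⟩
  · exact hno ⟨j, hjS, Relation.ReflTransGen.refl⟩
  · exact hnc ⟨hij, hkj⟩

lemma not_indepMap_of_sep_conn {H G : DAG p} {i k : Fin p} {S : Set (Fin p)}
    (hik : i ≠ k) (hiS : i ∉ S) (hkS : k ∉ S)
    (hsep : H.dSep i k S) (hconn : G.dConn i k S) : ¬ H.IndepMap G := by
  intro hIM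
  have := hIM {i} {k} S (by simp [Set.disjoint_singleton_left, hik])
    (Set.disjoint_singleton_left.mpr hiS) (Set.disjoint_singleton_left.mpr hkS)
    (fun a ha b hb => by
      simp only [Set.mem_singleton_iff] at ha hb
      subst ha; subst hb; exact hsep)
  exact this i rfl k rfl hconn

end DAG

open DAG in
/-- **The "if" direction of the characterization of independence maps.** If one of the three
conditions holds, then `H` is not an independence map of `G`. -/
theorem not_indepMap_of_cond {p : ℕ} (H G : DAG p)
    (hcond :
      (¬ skeletonSub G H) ∨
      (∃ i j k : Fin p, ¬ H.adj i k ∧ H.nonColliderTriple i j k ∧ G.vstruct i j k) ∨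
      (∃ i j k : Fin p, H.vstruct i j k ∧ i ∈ H.nd k ∧ G.dConn i k (H.pa k))) :
    ¬ H.IndepMap G := by
  rcases hcond with ha | hb | hc
  · -- case (a)
    rw [skeletonSub] at ha
    push_neg at ha
    obtain ⟨i, j, hGij, hHij⟩ := ha
    have hne : i ≠ j := by rcases hGij with h | h; exacts [E_ne h, (E_ne h).symm]
    by_cases hd : H.desc j i
    · have hd' : ¬ H.desc i j := fun h2 => hne (desc_antisymm h2 hd)
      have hHji : ¬ H.adj j i := fun h => hHij (by rcases h with h | h
                                                   exacts [Or.inr h, Or.inl h])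
      exact not_indepMap_of_sep_conn (S := H.pa i) hne.symm (fun h => hHij (Or.inr h))
        (fun h => (E_ne h) rfl) (H.local_markov hHji hd')
        (G.dConn_edge _ (by rcases hGij with h | h; exacts [Or.inr h, Or.inl h]) hne.symm)
    · exact not_indepMap_of_sep_conn (S := H.pa j) hne (fun h => hHij (Or.inl h))
        (fun h => (E_ne h) rfl) (H.local_markov hHij hd) (G.dConn_edge _ hGij hne)
  · -- case (b)
    obtain ⟨i, j, k, hHik, ⟨haij, hajk, hik, hij, hjk, hnc⟩, hGij, hGkj, -, -⟩ := hb
    have hHki : ¬ H.adj k i := fun h => hHik (by rcases h with h | h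
                                                 exacts [Or.inr h, Or.inl h])
    by_cases hjk' : H.E j k
    · by_cases hd : H.desc k i
      · have hd' : ¬ H.desc i k := fun h2 => hik (desc_antisymm h2 hd)
        have hji : H.E j i := by
          rcases haij with h | h
          · exact absurd (Relation.TransGen.tail' (hd.tail h) hjk') (H.acyclic k)
          · exact h
        exact not_indepMap_of_sep_conn (S := H.pa i) hik.symm (fun h => hHik (Or.inr h))
          (fun h => (E_ne h) rfl) (H.local_markov hHki hd')
          (G.dConn_collider hGkj hGij hik.symm hji)
      · exact not_indepMap_of_sep_conn (S := H.pa k) hik (fun h => hHik (Or.inl h))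
          (fun h => (E_ne h) rfl) (H.local_markov hHik hd)
          (G.dConn_collider hGij hGkj hik hjk')
    · have hkj : H.E k j := by rcases hajk with h | h; exacts [absurd h hjk', h]
      have hji : H.E j i := by
        rcases haij with h | h
        · exact absurd ⟨h, hkj⟩ hnc
        · exact h
      have hd' : ¬ H.desc i k := fun h2 =>
        H.acyclic i (Relation.TransGen.tail' (h2.tail hkj) hji)
      exact not_indepMap_of_sep_conn (S := H.pa i) hik.symm (fun h => hHik (Or.inr h))
        (fun h => (E_ne h) rfl) (H.local_markov hHki hd')
        (G.dConn_collider hGkj hGij hik.symm hji)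
  · -- case (c)
    obtain ⟨i, j, k, ⟨hEij, hEkj, hnadj, hik⟩, hnd, hconn⟩ := hc
    exact not_indepMap_of_sep_conn (S := H.pa k) hik (fun h => hnadj (Or.inl h))
      (fun h => (E_ne h) rfl) (H.local_markov hnadj hnd) hconn
end

section
/- Let X be a multivariate Gaussian random vector with positive definite covariance. Let H be a DAG with X_i a non-descendant and non-parent of X_k, and let H' be H with the edge X_i → X_k added. Then the difference of ℓ0-penalized Gaussian log-likelihood scores (computed from data D_n of n i.i.d. samples) satisfies S_λ(H', D_n) − S_λ(H, D_n) = (1/2) log(1 − r²) + λ, where r is the sample partial correlation between X_i and X_k given Pa_H(X_k). -/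
open Finset

/-- The principal submatrix of `V` indexed by the finite set `S`. -/
noncomputable def subCov {p : ℕ} (V : Matrix (Fin p) (Fin p) ℝ) (S : Finset (Fin p)) :
    Matrix S S ℝ := Matrix.of fun a b => V a.1 b.1

/-- The conditional covariance of coordinates `i` and `j` given the coordinates in `S`
(Schur complement formula). -/
noncomputable def condCov {p : ℕ} (V : Matrix (Fin p) (Fin p) ℝ) (S : Finset (Fin p))
    (i j : Fin p) : ℝ :=
  V i j - ∑ a : S, ∑ b : S, V i a.1 * (subCov V S)⁻¹ a b * V b.1 j

/-- The partial correlation between coordinates `i` and `j` given the coordinates in `S`. -/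
noncomputable def parcor {p : ℕ} (V : Matrix (Fin p) (Fin p) ℝ) (S : Finset (Fin p))
    (i j : Fin p) : ℝ :=
  condCov V S i j / Real.sqrt (condCov V S i i * condCov V S j j)

/-- A directed acyclic graph on `Fin p` with decidable (Boolean) edges. -/
structure FinDAG (p : ℕ) where
  E : Fin p → Fin p → Bool
  acyclic : ∀ i, ¬ Relation.TransGen (fun a b => E a b = true) i i

namespace FinDAG

variable {p : ℕ}

/-- The parents of `k`. -/
def pa (H : FinDAG p) (k : Fin p) : Finset (Fin p) := univ.filter fun i => H.E i k

/-- The number of edges of `H`. -/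
def edgeCount (H : FinDAG p) : ℕ := (univ.filter fun q : Fin p × Fin p => H.E q.1 q.2).card

/-- `j` is a descendant of `i` (each node is a descendant of itself). -/
def desc (H : FinDAG p) (i j : Fin p) : Prop :=
  Relation.ReflTransGen (fun a b => H.E a b = true) i j

end FinDAG

/-- The (uncentered) sample covariance matrix of the data `D` (`n` i.i.d. samples of a
mean-zero `p`-dimensional vector). -/
noncomputable def sampleCov (n p : ℕ) (D : Fin n → Fin p → ℝ) : Matrix (Fin p) (Fin p) ℝ :=
  Matrix.of fun i j => (1 / (n : ℝ)) * ∑ t, D t i * D t j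

/-- The maximized average Gaussian conditional log-likelihood of node `k` given the parent set
`P`: the supremum over regression coefficients `β` and error variance `σ² > 0` of the average
log of the conditional Gaussian density. -/
noncomputable def nodeMaxLL {n p : ℕ} (D : Fin n → Fin p → ℝ) (k : Fin p)
    (P : Finset (Fin p)) : ℝ :=
  sSup { v : ℝ | ∃ (β : Fin p → ℝ) (σ2 : ℝ), 0 < σ2 ∧
    v = (1 / (n : ℝ)) * ∑ t, Real.log
      ((Real.sqrt (2 * Real.pi * σ2))⁻¹ *
        Real.exp (-(D t k - ∑ j ∈ P, β j * D t j) ^ 2 / (2 * σ2))) }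

/-- The ℓ₀-penalized negative Gaussian log-likelihood score of a DAG `H` for data `D`. -/
noncomputable def score {n p : ℕ} (lam : ℝ) (H : FinDAG p) (D : Fin n → Fin p → ℝ) : ℝ :=
  (- ∑ k, nodeMaxLL D k (H.pa k)) + lam * H.edgeCount

namespace ScoreAux

open Matrix

variable {n p : ℕ}

noncomputable def extC {p : ℕ} (S : Finset (Fin p)) (x : S → ℝ) : Fin p → ℝ :=
  fun j => if h : j ∈ S then x ⟨j, h⟩ else 0

lemma extC_mem {S : Finset (Fin p)} (x : S → ℝ) {j : Fin p} (h : j ∈ S) :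
    extC S x j = x ⟨j, h⟩ := dif_pos h

lemma extC_not_mem {S : Finset (Fin p)} (x : S → ℝ) {j : Fin p} (h : j ∉ S) :
    extC S x j = 0 := dif_neg h

lemma sum_subtype_eq (S : Finset (Fin p)) (c : Fin p → ℝ) (g : Fin p → ℝ) :
    ∑ a : S, c a.1 * g a.1 = ∑ j ∈ S, c j * g j := by
  rw [Finset.univ_eq_attach]
  exact Finset.sum_attach S fun j => c j * g j

lemma sum_extC (S : Finset (Fin p)) (x : S → ℝ) (g : Fin p → ℝ) :
    ∑ a : S, x a * g a.1 = ∑ j ∈ S, extC S x j * g j := by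
  rw [← sum_subtype_eq S (extC S x) g]
  refine Finset.sum_congr rfl fun a _ => ?_
  rw [extC_mem x a.2]

lemma qform (D : Fin n → Fin p → ℝ) (S : Finset (Fin p)) (x : S → ℝ) :
    x ⬝ᵥ (subCov (sampleCov n p D) S) *ᵥ x
      = (1 / (n : ℝ)) * ∑ t, (∑ a : S, x a * D t a.1) ^ 2 := by
  have h2 : ∀ t : Fin n, (∑ a : S, x a * D t a.1) ^ 2
      = ∑ a : S, ∑ b : S, x a * x b * (D t a.1 * D t b.1) := by
    intro t
    rw [sq, Finset.sum_mul_sum]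
    exact Finset.sum_congr rfl fun a _ => Finset.sum_congr rfl fun b _ => by ring
  have step : ∀ t, ∑ a : S, ∑ b : S, (1/(n:ℝ)) * (x a * x b * (D t a.1 * D t b.1))
      = (1/(n:ℝ)) * (∑ a : S, x a * D t a.1)^2 := by
    intro t
    rw [h2 t]
    simp only [Finset.mul_sum]
  calc x ⬝ᵥ (subCov (sampleCov n p D) S) *ᵥ x
      = ∑ a : S, ∑ b : S, ∑ t, (1/(n:ℝ)) * (x a * x b * (D t a.1 * D t b.1)) := by
        simp only [dotProduct, mulVec, subCov, sampleCov, Matrix.of_apply]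
        refine Finset.sum_congr rfl fun a _ => ?_
        rw [Finset.mul_sum]
        refine Finset.sum_congr rfl fun b _ => ?_
        rw [← Finset.mul_sum, ← Finset.mul_sum]
        ring
    _ = ∑ t, ∑ a : S, ∑ b : S, (1/(n:ℝ)) * (x a * x b * (D t a.1 * D t b.1)) := by
        calc ∑ a : S, ∑ b : S, ∑ t, (1/(n:ℝ)) * (x a * x b * (D t a.1 * D t b.1))
            = ∑ a : S, ∑ t, ∑ b : S, (1/(n:ℝ)) * (x a * x b * (D t a.1 * D t b.1)) :=
              Finset.sum_congr rfl fun a _ => Finset.sum_comm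
          _ = ∑ t, ∑ a : S, ∑ b : S, (1/(n:ℝ)) * (x a * x b * (D t a.1 * D t b.1)) :=
              Finset.sum_comm
    _ = ∑ t, (1/(n:ℝ)) * (∑ a : S, x a * D t a.1)^2 :=
        Finset.sum_congr rfl fun t _ => step t
    _ = (1/(n:ℝ)) * ∑ t, (∑ a : S, x a * D t a.1)^2 := (Finset.mul_sum _ _ _).symm

noncomputable def coefZ (D : Fin n → Fin p → ℝ) (P : Finset (Fin p)) (z : Fin n → ℝ) :
    P → ℝ :=
  (subCov (sampleCov n p D) P)⁻¹ *ᵥ (fun s => (1/(n:ℝ)) * ∑ t, D t s.1 * z t)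

noncomputable def residZ (D : Fin n → Fin p → ℝ) (P : Finset (Fin p)) (z : Fin n → ℝ) :
    Fin n → ℝ :=
  fun t => z t - ∑ s : P, coefZ D P z s * D t s.1

lemma sum_mul_residZ (D : Fin n → Fin p → ℝ) (P : Finset (Fin p)) (z : Fin n → ℝ)
    (g : Fin n → ℝ) :
    ∑ t, g t * residZ D P z t
      = ∑ t, g t * z t - ∑ s : P, coefZ D P z s * ∑ t, g t * D t s.1 := by
  calc ∑ t, g t * residZ D P z t
      = ∑ t, (g t * z t - ∑ s : P, coefZ D P z s * (g t * D t s.1)) := by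
        refine Finset.sum_congr rfl fun t _ => ?_
        simp only [residZ]
        rw [mul_sub, Finset.mul_sum]
        congr 1
        exact Finset.sum_congr rfl fun s _ => by ring
    _ = ∑ t, g t * z t - ∑ t, ∑ s : P, coefZ D P z s * (g t * D t s.1) :=
        Finset.sum_sub_distrib _ _
    _ = ∑ t, g t * z t - ∑ s : P, coefZ D P z s * ∑ t, g t * D t s.1 := by
        congr 1
        rw [Finset.sum_comm]
        exact Finset.sum_congr rfl fun s _ => (Finset.mul_sum _ _ _).symm

lemma orth (hn : 0 < n) (D : Fin n → Fin p → ℝ) (P : Finset (Fin p))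
    (hM : IsUnit (subCov (sampleCov n p D) P).det) (z : Fin n → ℝ)
    {u : Fin p} (hu : u ∈ P) :
    ∑ t, D t u * residZ D P z t = 0 := by
  have hne : (n:ℝ) ≠ 0 := Nat.cast_ne_zero.2 hn.ne'
  set M := subCov (sampleCov n p D) P with hMdef
  have hinv : M * M⁻¹ = 1 := Matrix.mul_nonsing_inv M hM
  have hkey : ∑ s : P, M ⟨u, hu⟩ s * coefZ D P z s = (1/(n:ℝ)) * ∑ t, D t u * z t := by
    have h1 : M *ᵥ coefZ D P z = fun s : P => (1/(n:ℝ)) * ∑ t, D t s.1 * z t := by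
      rw [coefZ, ← hMdef, Matrix.mulVec_mulVec, hinv, Matrix.one_mulVec]
    have h2 := congrFun h1 ⟨u, hu⟩
    simpa [Matrix.mulVec, dotProduct] using h2
  have hMe : ∀ s : P, ∑ t, D t u * D t s.1 = (n:ℝ) * M ⟨u, hu⟩ s := by
    intro s
    rw [hMdef]
    simp only [subCov, sampleCov, Matrix.of_apply]
    field_simp
  rw [sum_mul_residZ]
  have : ∑ s : P, coefZ D P z s * ∑ t, D t u * D t s.1
      = (n:ℝ) * ∑ s : P, M ⟨u, hu⟩ s * coefZ D P z s := by
    rw [Finset.mul_sum]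
    refine Finset.sum_congr rfl fun s _ => ?_
    rw [hMe s]; ring
  rw [this, hkey]
  field_simp
  ring

lemma resid_inner (hn : 0 < n) (D : Fin n → Fin p → ℝ) (P : Finset (Fin p))
    (hM : IsUnit (subCov (sampleCov n p D) P).det) (a b : Fin p) :
    (1/(n:ℝ)) * ∑ t, residZ D P (fun t => D t a) t * residZ D P (fun t => D t b) t
      = condCov (sampleCov n p D) P a b := by
  have h1 : ∑ t, residZ D P (fun t => D t a) t * residZ D P (fun t => D t b) t
      = ∑ t, D t a * residZ D P (fun t => D t b) t := by
    have hc : ∑ t, residZ D P (fun t => D t b) t * residZ D P (fun t => D t a) t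
        = ∑ t, residZ D P (fun t => D t b) t * D t a
          - ∑ s : P, coefZ D P (fun t => D t a) s * ∑ t, residZ D P (fun t => D t b) t * D t s.1 := by
      exact sum_mul_residZ D P (fun t => D t a) (residZ D P (fun t => D t b))
    have hz : ∀ s : P, ∑ t, residZ D P (fun t => D t b) t * D t s.1 = 0 := by
      intro s
      rw [show (∑ t, residZ D P (fun t => D t b) t * D t s.1)
          = ∑ t, D t s.1 * residZ D P (fun t => D t b) t from
        Finset.sum_congr rfl fun t _ => mul_comm _ _]
      exact orth hn D P hM _ s.2
    simp only [hz, mul_zero, Finset.sum_const_zero, sub_zero] at hc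
    calc ∑ t, residZ D P (fun t => D t a) t * residZ D P (fun t => D t b) t
        = ∑ t, residZ D P (fun t => D t b) t * residZ D P (fun t => D t a) t :=
          Finset.sum_congr rfl fun t _ => mul_comm _ _
      _ = ∑ t, residZ D P (fun t => D t b) t * D t a := hc
      _ = ∑ t, D t a * residZ D P (fun t => D t b) t :=
          Finset.sum_congr rfl fun t _ => mul_comm _ _
  have h2 : ∑ t, D t a * residZ D P (fun t => D t b) t
      = ∑ t, D t a * D t b
        - ∑ s : P, coefZ D P (fun t => D t b) s * ∑ t, D t a * D t s.1 :=
    sum_mul_residZ D P (fun t => D t b) (fun t => D t a)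
  have hT : (1/(n:ℝ)) * ∑ s : P, coefZ D P (fun t => D t b) s * ∑ t, D t a * D t s.1
      = ∑ a' : P, ∑ b' : P, sampleCov n p D a a'.1 * (subCov (sampleCov n p D) P)⁻¹ a' b'
          * sampleCov n p D b'.1 b := by
    rw [Finset.mul_sum]
    refine Finset.sum_congr rfl fun s _ => ?_
    simp only [coefZ, Matrix.mulVec, dotProduct]
    rw [Finset.sum_mul, Finset.mul_sum]
    refine Finset.sum_congr rfl fun s' _ => ?_
    simp only [sampleCov, Matrix.of_apply]
    ring
  rw [h1, h2, mul_sub, hT]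
  simp only [condCov, sampleCov, Matrix.of_apply]

lemma min_rss (hn : 0 < n) (D : Fin n → Fin p → ℝ) (P : Finset (Fin p))
    (hM : IsUnit (subCov (sampleCov n p D) P).det) (z : Fin n → ℝ) (β : Fin p → ℝ) :
    ∑ t, residZ D P z t ^ 2 ≤ ∑ t, (z t - ∑ j ∈ P, β j * D t j) ^ 2 := by
  set e : Fin n → ℝ := fun t => ∑ j ∈ P, (extC P (coefZ D P z) j - β j) * D t j with he
  have hdec : ∀ t, z t - ∑ j ∈ P, β j * D t j = residZ D P z t + e t := by
    intro t
    have h0 : ∑ s : P, coefZ D P z s * D t s.1 = ∑ j ∈ P, extC P (coefZ D P z) j * D t j :=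
      sum_extC P (coefZ D P z) (fun j => D t j)
    have h3 : e t = ∑ j ∈ P, extC P (coefZ D P z) j * D t j - ∑ j ∈ P, β j * D t j := by
      rw [he]
      rw [← Finset.sum_sub_distrib]
      exact Finset.sum_congr rfl fun j _ => by ring
    simp only [residZ, h0, h3]
    ring
  have hcross : ∑ t, residZ D P z t * e t = 0 := by
    have h4 : ∀ t, residZ D P z t * e t
        = ∑ j ∈ P, (extC P (coefZ D P z) j - β j) * (D t j * residZ D P z t) := by
      intro t
      rw [he]
      rw [Finset.mul_sum]
      exact Finset.sum_congr rfl fun j _ => by ring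
    calc ∑ t, residZ D P z t * e t
        = ∑ t, ∑ j ∈ P, (extC P (coefZ D P z) j - β j) * (D t j * residZ D P z t) :=
          Finset.sum_congr rfl fun t _ => h4 t
      _ = ∑ j ∈ P, ∑ t, (extC P (coefZ D P z) j - β j) * (D t j * residZ D P z t) :=
          Finset.sum_comm
      _ = 0 := by
          refine Finset.sum_eq_zero fun j hj => ?_
          rw [← Finset.mul_sum, orth hn D P hM z hj, mul_zero]
  have hsum : ∑ t, (residZ D P z t + e t)^2 = ∑ t, residZ D P z t^2 + ∑ t, (e t)^2 := by
    have expand : ∀ t, (residZ D P z t + e t)^2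
        = residZ D P z t^2 + 2*(residZ D P z t * e t) + e t^2 := fun t => by ring
    calc ∑ t, (residZ D P z t + e t)^2
        = ∑ t, (residZ D P z t^2 + 2*(residZ D P z t * e t) + e t^2) :=
          Finset.sum_congr rfl fun t _ => expand t
      _ = ∑ t, residZ D P z t^2 + 2 * ∑ t, (residZ D P z t * e t) + ∑ t, (e t)^2 := by
          rw [Finset.sum_add_distrib, Finset.sum_add_distrib, ← Finset.mul_sum]
      _ = ∑ t, residZ D P z t^2 + ∑ t, (e t)^2 := by rw [hcross]; ring
  calc ∑ t, residZ D P z t ^ 2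
      ≤ ∑ t, residZ D P z t^2 + ∑ t, (e t)^2 :=
        le_add_of_nonneg_right (Finset.sum_nonneg fun t _ => sq_nonneg _)
    _ = ∑ t, (residZ D P z t + e t)^2 := hsum.symm
    _ = ∑ t, (z t - ∑ j ∈ P, β j * D t j)^2 :=
        Finset.sum_congr rfl fun t _ => by rw [hdec t]

lemma sampleCov_symm (D : Fin n → Fin p → ℝ) (a b : Fin p) :
    sampleCov n p D a b = sampleCov n p D b a := by
  simp only [sampleCov, Matrix.of_apply]
  congr 1
  exact Finset.sum_congr rfl fun t _ => mul_comm _ _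

lemma ext_sum_subset {S T : Finset (Fin p)} (hST : S ⊆ T) (x : S → ℝ) (g : Fin p → ℝ) :
    ∑ a : S, x a * g a.1 = ∑ b : T, extC S x b.1 * g b.1 := by
  rw [sum_extC S x g, sum_subtype_eq T (extC S x) g]
  refine Finset.sum_subset hST fun j _ hj => ?_
  rw [extC_not_mem x hj, zero_mul]

lemma posdef_sub (D : Fin n → Fin p → ℝ) {S T : Finset (Fin p)} (hST : S ⊆ T)
    (hT : (subCov (sampleCov n p D) T).PosDef) :
    (subCov (sampleCov n p D) S).PosDef := by
  refine Matrix.PosDef.of_dotProduct_mulVec_pos ?_ ?_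
  · show _ = _
    ext a b
    simp only [Matrix.conjTranspose_apply, subCov, Matrix.of_apply, star_trivial]
    exact sampleCov_symm D b.1 a.1
  · intro x hx
    set x' : T → ℝ := fun b => extC S x b.1 with hx'def
    have hne : x' ≠ 0 := by
      obtain ⟨a, ha⟩ := Function.ne_iff.1 hx
      refine Function.ne_iff.2 ⟨⟨a.1, hST a.2⟩, ?_⟩
      simpa [hx'def, extC_mem x a.2] using ha
    have hpos : (0:ℝ) < x' ⬝ᵥ (subCov (sampleCov n p D) T) *ᵥ x' := by simpa only [star_trivial] using hT.dotProduct_mulVec_pos hne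
    rw [qform D T x'] at hpos
    have hsame : ∑ t, (∑ b : T, x' b * D t b.1)^2 = ∑ t, (∑ a : S, x a * D t a.1)^2 :=
      Finset.sum_congr rfl fun t _ =>
        by rw [← ext_sum_subset hST x (fun j => D t j)]
    rw [hsame] at hpos
    have : (0:ℝ) < x ⬝ᵥ (subCov (sampleCov n p D) S) *ᵥ x := by
      rw [qform D S x]; exact hpos
    simpa only [star_trivial] using this

lemma qform_pos (D : Fin n → Fin p → ℝ) {S : Finset (Fin p)}
    (hS : (subCov (sampleCov n p D) S).PosDef)
    (c : Fin p → ℝ) {j0 : Fin p} (hj0 : j0 ∈ S) (hc : c j0 ≠ 0) :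
    0 < (1/(n:ℝ)) * ∑ t, (∑ j ∈ S, c j * D t j)^2 := by
  have hx : (fun a : S => c a.1) ≠ 0 := Function.ne_iff.2 ⟨⟨j0, hj0⟩, hc⟩
  have hpos : (0:ℝ) < (fun a : S => c a.1) ⬝ᵥ (subCov (sampleCov n p D) S) *ᵥ
      (fun a : S => c a.1) := by simpa only [star_trivial] using hS.dotProduct_mulVec_pos hx
  rw [qform D S (fun a : S => c a.1)] at hpos
  have heq : ∑ t, (∑ a : S, c a.1 * D t a.1)^2 = ∑ t, (∑ j ∈ S, c j * D t j)^2 :=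
    Finset.sum_congr rfl fun t _ => by rw [sum_subtype_eq S c (fun j => D t j)]
  rw [heq] at hpos
  exact hpos


lemma loglik_val (hn : 0 < n) (z : Fin n → ℝ) (σ2 : ℝ) (hσ : 0 < σ2) :
    (1/(n:ℝ)) * ∑ t, Real.log ((Real.sqrt (2 * Real.pi * σ2))⁻¹ *
        Real.exp (-(z t)^2 / (2 * σ2)))
      = -(1/2) * Real.log (2 * Real.pi * σ2)
        - ((1/(n:ℝ)) * ∑ t, (z t)^2) / (2 * σ2) := by
  have hnR : (0:ℝ) < (n:ℝ) := Nat.cast_pos.2 hn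
  have h2π : (0:ℝ) < 2 * Real.pi * σ2 := by positivity
  have hterm : ∀ t, Real.log ((Real.sqrt (2 * Real.pi * σ2))⁻¹ *
      Real.exp (-(z t)^2 / (2 * σ2)))
      = -(1/2) * Real.log (2 * Real.pi * σ2) + (-(z t)^2 / (2*σ2)) := by
    intro t
    rw [Real.log_mul (by positivity) (Real.exp_ne_zero _), Real.log_inv,
      Real.log_sqrt h2π.le, Real.log_exp]
    ring
  have hsum : ∑ t, Real.log ((Real.sqrt (2 * Real.pi * σ2))⁻¹ *
      Real.exp (-(z t)^2 / (2 * σ2)))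
      = ∑ t : Fin n, (-(1/2) * Real.log (2 * Real.pi * σ2) + (-(z t)^2 / (2*σ2))) :=
    Finset.sum_congr rfl fun t _ => hterm t
  rw [hsum, Finset.sum_add_distrib, Finset.sum_const, Finset.card_univ, Fintype.card_fin,
    nsmul_eq_mul]
  have h5 : ∑ t, (-(z t)^2 / (2*σ2)) = (-(∑ t, (z t)^2)) / (2*σ2) := by
    rw [← Finset.sum_div, ← Finset.sum_neg_distrib]
  rw [h5]
  field_simp
  ring

lemma nodeMaxLL_eq (hn : 0 < n) (D : Fin n → Fin p → ℝ) (k : Fin p) (P : Finset (Fin p))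
    (c0 : ℝ) (hc0 : 0 < c0)
    (hmin : ∀ β : Fin p → ℝ, c0 ≤ (1/(n:ℝ)) * ∑ t, (D t k - ∑ j ∈ P, β j * D t j)^2)
    (hach : ∃ β : Fin p → ℝ, (1/(n:ℝ)) * ∑ t, (D t k - ∑ j ∈ P, β j * D t j)^2 = c0) :
    nodeMaxLL D k P = -(1/2) * (Real.log (2 * Real.pi * c0) + 1) := by
  obtain ⟨β₀, hβ₀⟩ := hach
  apply IsGreatest.csSup_eq
  constructor
  · refine ⟨β₀, c0, hc0, ?_⟩
    rw [loglik_val hn (fun t => D t k - ∑ j ∈ P, β₀ j * D t j) c0 hc0, hβ₀]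
    have : c0/(2*c0) = 1/2 := by
      rw [div_eq_iff (by positivity)]; ring
    rw [this]
    ring
  · rintro v ⟨β, σ2, hσ, rfl⟩
    rw [loglik_val hn (fun t => D t k - ∑ j ∈ P, β j * D t j) σ2 hσ]
    have hc := hmin β
    have hlog : Real.log c0 - Real.log σ2 ≤ c0/σ2 - 1 := by
      have h := Real.log_le_sub_one_of_pos (show (0:ℝ) < c0/σ2 by positivity)
      rwa [Real.log_div hc0.ne' hσ.ne'] at h
    have hl1 : Real.log (2*Real.pi*σ2) = Real.log (2*Real.pi) + Real.log σ2 :=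
      Real.log_mul (by positivity) hσ.ne'
    have hl2 : Real.log (2*Real.pi*c0) = Real.log (2*Real.pi) + Real.log c0 :=
      Real.log_mul (by positivity) hc0.ne'
    have hdiv : c0/(2*σ2) ≤ ((1/(n:ℝ)) * ∑ t, (D t k - ∑ j ∈ P, β j * D t j)^2)/(2*σ2) :=
      (div_le_div_iff_of_pos_right (by positivity)).mpr hc
    have hhalf : c0/σ2 = 2*(c0/(2*σ2)) := by ring
    rw [hl1, hl2]
    linarith

lemma coefZ_linear (D : Fin n → Fin p → ℝ) (P : Finset (Fin p)) (s : ℝ) (i k : Fin p)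
    (a : P) :
    coefZ D P (fun t => D t k - s * D t i) a
      = coefZ D P (fun t => D t k) a - s * coefZ D P (fun t => D t i) a := by
  have key : ∀ x : P, (1/(n:ℝ)) * (∑ t, D t x.1 * (D t k - s * D t i))
      = (1/(n:ℝ)) * ∑ t, D t x.1 * D t k - s * ((1/(n:ℝ)) * ∑ t, D t x.1 * D t i) := by
    intro x
    have h0 : ∑ t, D t x.1 * (D t k - s * D t i)
        = ∑ t, D t x.1 * D t k - s * ∑ t, D t x.1 * D t i := by
      calc ∑ t, D t x.1 * (D t k - s * D t i)
          = ∑ t, (D t x.1 * D t k - s * (D t x.1 * D t i)) :=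
            Finset.sum_congr rfl fun t _ => by ring
        _ = _ := by rw [Finset.sum_sub_distrib, Finset.mul_sum]
    rw [h0]
    ring
  simp only [coefZ, Matrix.mulVec, dotProduct]
  calc ∑ x : P, (subCov (sampleCov n p D) P)⁻¹ a x
          * ((1/(n:ℝ)) * ∑ t, D t x.1 * (D t k - s * D t i))
      = ∑ x : P, ((subCov (sampleCov n p D) P)⁻¹ a x
          * ((1/(n:ℝ)) * ∑ t, D t x.1 * D t k)
          - s * ((subCov (sampleCov n p D) P)⁻¹ a x
          * ((1/(n:ℝ)) * ∑ t, D t x.1 * D t i))) := by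
        refine Finset.sum_congr rfl fun x _ => ?_
        rw [key x]
        ring
    _ = ∑ x : P, (subCov (sampleCov n p D) P)⁻¹ a x * ((1/(n:ℝ)) * ∑ t, D t x.1 * D t k)
        - s * ∑ x : P, (subCov (sampleCov n p D) P)⁻¹ a x
          * ((1/(n:ℝ)) * ∑ t, D t x.1 * D t i) := by
        rw [Finset.sum_sub_distrib, ← Finset.mul_sum]

lemma residZ_sub (D : Fin n → Fin p → ℝ) (P : Finset (Fin p)) (s : ℝ) (i k : Fin p)
    (t : Fin n) :
    residZ D P (fun t => D t k - s * D t i) t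
      = residZ D P (fun t => D t k) t - s * residZ D P (fun t => D t i) t := by
  simp only [residZ]
  have h1 : ∑ s' : P, coefZ D P (fun t => D t k - s * D t i) s' * D t s'.1
      = ∑ s' : P, (coefZ D P (fun t => D t k) s' - s * coefZ D P (fun t => D t i) s')
          * D t s'.1 :=
    Finset.sum_congr rfl fun s' _ => by rw [coefZ_linear]
  rw [h1]
  have h2 : ∑ s' : P, (coefZ D P (fun t => D t k) s' - s * coefZ D P (fun t => D t i) s')
        * D t s'.1
      = ∑ s' : P, coefZ D P (fun t => D t k) s' * D t s'.1
        - s * ∑ s' : P, coefZ D P (fun t => D t i) s' * D t s'.1 := by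
    calc ∑ s' : P, (coefZ D P (fun t => D t k) s' - s * coefZ D P (fun t => D t i) s')
          * D t s'.1
        = ∑ s' : P, (coefZ D P (fun t => D t k) s' * D t s'.1
            - s * (coefZ D P (fun t => D t i) s' * D t s'.1)) :=
          Finset.sum_congr rfl fun s' _ => by ring
      _ = _ := by rw [Finset.sum_sub_distrib, Finset.mul_sum]
  rw [h2]
  ring

lemma quad (f g : Fin n → ℝ) (s : ℝ) :
    (1/(n:ℝ)) * ∑ t, (f t - s * g t)^2
      = (1/(n:ℝ)) * ∑ t, f t * f t - 2*s*((1/(n:ℝ)) * ∑ t, g t * f t)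
        + s^2*((1/(n:ℝ)) * ∑ t, g t * g t) := by
  have h1 : ∑ t, (f t - s * g t)^2
      = ∑ t, f t * f t - 2*s* ∑ t, g t * f t + s^2 * ∑ t, g t * g t := by
    calc ∑ t, (f t - s * g t)^2
        = ∑ t, (f t * f t - 2*s*(g t * f t) + s^2*(g t * g t)) :=
          Finset.sum_congr rfl fun t _ => by ring
      _ = ∑ t, (f t * f t - 2*s*(g t * f t)) + ∑ t, s^2*(g t * g t) :=
          Finset.sum_add_distrib
      _ = _ := by
          rw [Finset.sum_sub_distrib, ← Finset.mul_sum, ← Finset.mul_sum]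
  rw [h1]
  ring

lemma residZ_eq (D : Fin n → Fin p → ℝ) (P : Finset (Fin p)) (z : Fin n → ℝ) (t : Fin n) :
    residZ D P z t = z t - ∑ j ∈ P, extC P (coefZ D P z) j * D t j := by
  simp only [residZ]
  rw [sum_extC P (coefZ D P z) (fun j => D t j)]

lemma resid_self_pos (D : Fin n → Fin p → ℝ) {P big : Finset (Fin p)}
    (hbig : (subCov (sampleCov n p D) big).PosDef) {a : Fin p} (haP : a ∉ P)
    (hsub : insert a P ⊆ big) :
    0 < (1/(n:ℝ)) * ∑ t, residZ D P (fun t => D t a) t * residZ D P (fun t => D t a) t := by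
  set c : Fin p → ℝ := fun j => if j = a then 1
    else -(extC P (coefZ D P (fun t => D t a)) j) with hc
  have hrep : ∀ t, residZ D P (fun t => D t a) t = ∑ j ∈ insert a P, c j * D t j := by
    intro t
    rw [Finset.sum_insert haP]
    have e1 : c a = 1 := by simp [hc]
    have e2 : ∑ j ∈ P, c j * D t j
        = -∑ j ∈ P, extC P (coefZ D P (fun t => D t a)) j * D t j := by
      rw [← Finset.sum_neg_distrib]
      refine Finset.sum_congr rfl fun j hj => ?_
      have e3 : c j = -(extC P (coefZ D P (fun t => D t a)) j) := by
        simp only [hc]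
        rw [if_neg (show ¬ j = a from fun h => haP (h ▸ hj))]
      rw [e3]; ring
    rw [e1, e2, one_mul]
    simp only [residZ]
    rw [sum_extC P (coefZ D P (fun t => D t a)) (fun j => D t j)]
    ring
  have hq := qform_pos D (posdef_sub D hsub hbig) c (Finset.mem_insert_self a P)
    (by simp [hc])
  have heq : (1/(n:ℝ)) * ∑ t, residZ D P (fun t => D t a) t * residZ D P (fun t => D t a) t
      = (1/(n:ℝ)) * ∑ t, (∑ j ∈ insert a P, c j * D t j)^2 := by
    refine congrArg (fun X => (1/(n:ℝ)) * X) (Finset.sum_congr rfl fun t _ => ?_)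
    rw [hrep t]; ring
  rw [heq]
  exact hq

lemma resid_two_pos (D : Fin n → Fin p → ℝ) {P big : Finset (Fin p)}
    (hbig : (subCov (sampleCov n p D) big).PosDef) {i k : Fin p} (hiP : i ∉ P) (hkP : k ∉ P)
    (hki : k ≠ i) (hsub : insert k (insert i P) ⊆ big) (s : ℝ) :
    0 < (1/(n:ℝ)) * ∑ t,
      (residZ D P (fun t => D t k) t - s * residZ D P (fun t => D t i) t)^2 := by
  set c : Fin p → ℝ := fun j => if j = k then 1 else if j = i then -s
    else -(extC P (coefZ D P (fun t => D t k - s * D t i)) j) with hc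
  have hkiP : k ∉ insert i P := by simp [Finset.mem_insert, hkP, hki]
  have hrep : ∀ t, residZ D P (fun t => D t k) t - s * residZ D P (fun t => D t i) t
      = ∑ j ∈ insert k (insert i P), c j * D t j := by
    intro t
    rw [← residZ_sub D P s i k t]
    rw [Finset.sum_insert hkiP, Finset.sum_insert hiP]
    have e1 : c k = 1 := by simp [hc]
    have e2 : c i = -s := by simp [hc, Ne.symm hki]
    have e3 : ∑ j ∈ P, c j * D t j
        = -∑ j ∈ P, extC P (coefZ D P (fun t => D t k - s * D t i)) j * D t j := by
      rw [← Finset.sum_neg_distrib]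
      refine Finset.sum_congr rfl fun j hj => ?_
      have e4 : c j = -(extC P (coefZ D P (fun t => D t k - s * D t i)) j) := by
        simp only [hc]
        rw [if_neg (show ¬ j = k from fun h => hkP (h ▸ hj)), if_neg (show ¬ j = i from fun h => hiP (h ▸ hj))]
      rw [e4]; ring
    rw [e1, e2, e3, one_mul]
    simp only [residZ]
    rw [sum_extC P (coefZ D P (fun t => D t k - s * D t i)) (fun j => D t j)]
    ring
  have hq := qform_pos D (posdef_sub D hsub hbig) c (Finset.mem_insert_self k _)
    (by simp [hc])
  have heq : (1/(n:ℝ)) * ∑ t,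
        (residZ D P (fun t => D t k) t - s * residZ D P (fun t => D t i) t)^2
      = (1/(n:ℝ)) * ∑ t, (∑ j ∈ insert k (insert i P), c j * D t j)^2 := by
    refine congrArg (fun X => (1/(n:ℝ)) * X) (Finset.sum_congr rfl fun t _ => ?_)
    rw [hrep t]
  rw [heq]
  exact hq

end ScoreAux


/-- **Score difference (Lemma 1).** If `H'` is obtained from `H` by adding the edge `i → k`
(with `i` a non-descendant and non-parent of `k` in `H`), then the ℓ₀-penalized Gaussian
log-likelihood score difference is `(1/2)·log(1 − r²) + λ`, where `r` is the sample partial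
correlation between `X_i` and `X_k` given `Pa_H(k)`. -/
theorem score_difference {n p : ℕ} (hn : 0 < n) (D : Fin n → Fin p → ℝ) (lam : ℝ)
    (H H' : FinDAG p) (i k : Fin p) (hik : i ≠ k)
    (hnd : ¬ H.desc k i) (hnp : i ∉ H.pa k)
    (hH' : ∀ a b, H'.E a b = true ↔ (H.E a b = true ∨ (a = i ∧ b = k)))
    (hpos : (subCov (sampleCov n p D) (insert i (insert k (H.pa k)))).PosDef) :
    score lam H' D - score lam H D
      = (1 / 2) * Real.log (1 - parcor (sampleCov n p D) (H.pa k) i k ^ 2) + lam := by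
  
  classical
  -- combinatorial facts about the DAG edit
  have hkk : ¬ (H.E k k = true) := fun h => H.acyclic k (Relation.TransGen.single h)
  have hkP : k ∉ H.pa k := by simp [FinDAG.pa, hkk]
  have hiP : i ∉ H.pa k := hnp
  have hEik : ¬ (H.E i k = true) := by simpa [FinDAG.pa] using hnp
  have hpa' : H'.pa k = insert i (H.pa k) := by
    ext j
    simp only [FinDAG.pa, Finset.mem_filter, Finset.mem_univ, true_and, Finset.mem_insert]
    rw [hH' j k]
    constructor
    · rintro (h | ⟨rfl, -⟩)
      · exact Or.inr h
      · exact Or.inl rfl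
    · rintro (rfl | h)
      · exact Or.inr ⟨rfl, rfl⟩
      · exact Or.inl h
  have hpaother : ∀ j, j ≠ k → H'.pa j = H.pa j := by
    intro j hj
    ext a
    simp only [FinDAG.pa, Finset.mem_filter, Finset.mem_univ, true_and]
    rw [hH' a j]
    constructor
    · rintro (h | ⟨-, rfl⟩)
      · exact h
      · exact absurd rfl hj
    · exact Or.inl
  have hcount : H'.edgeCount = H.edgeCount + 1 := by
    have hfil : (Finset.univ.filter fun q : Fin p × Fin p => H'.E q.1 q.2)
        = insert (i, k) (Finset.univ.filter fun q : Fin p × Fin p => H.E q.1 q.2) := by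
      ext q
      simp only [Finset.mem_filter, Finset.mem_univ, true_and, Finset.mem_insert]
      rw [hH' q.1 q.2]
      constructor
      · rintro (h | ⟨h1, h2⟩)
        · exact Or.inr h
        · refine Or.inl ?_
          cases q
          simp_all
      · rintro (rfl | h)
        · exact Or.inr ⟨rfl, rfl⟩
        · exact Or.inl h
    rw [FinDAG.edgeCount, FinDAG.edgeCount, hfil,
      Finset.card_insert_of_notMem (by simp [hEik])]
  -- positive definiteness of relevant submatrices
  have hsub1 : H.pa k ⊆ insert i (insert k (H.pa k)) := fun j hj => by simp [hj]
  have hsub2 : insert k (H.pa k) ⊆ insert i (insert k (H.pa k)) := by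
    intro j hj
    simp only [Finset.mem_insert] at hj ⊢
    tauto
  have hsub3 : insert i (H.pa k) ⊆ insert i (insert k (H.pa k)) := by
    intro j hj
    simp only [Finset.mem_insert] at hj ⊢
    tauto
  have hsub4 : insert k (insert i (H.pa k)) ⊆ insert i (insert k (H.pa k)) := by
    intro j hj
    simp only [Finset.mem_insert] at hj ⊢
    tauto
  have hPD_P := ScoreAux.posdef_sub D hsub1 hpos
  have hM : IsUnit (subCov (sampleCov n p D) (H.pa k)).det :=
    isUnit_iff_ne_zero.2 hPD_P.det_pos.ne'
  -- residuals and conditional (co)variances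
  set rK : Fin n → ℝ := ScoreAux.residZ D (H.pa k) (fun t => D t k) with hrK
  set rA : Fin n → ℝ := ScoreAux.residZ D (H.pa k) (fun t => D t i) with hrA
  set A : ℝ := (1/(n:ℝ)) * ∑ t, rA t * rA t with hAdef
  set B : ℝ := (1/(n:ℝ)) * ∑ t, rA t * rK t with hBdef
  set C : ℝ := (1/(n:ℝ)) * ∑ t, rK t * rK t with hCdef
  have hA : A = condCov (sampleCov n p D) (H.pa k) i i := by
    rw [hAdef, hrA]; exact ScoreAux.resid_inner hn D _ hM i i
  have hB : B = condCov (sampleCov n p D) (H.pa k) i k := by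
    rw [hBdef, hrA, hrK]; exact ScoreAux.resid_inner hn D _ hM i k
  have hC : C = condCov (sampleCov n p D) (H.pa k) k k := by
    rw [hCdef, hrK]; exact ScoreAux.resid_inner hn D _ hM k k
  have hApos : 0 < A := by
    rw [hAdef, hrA]; exact ScoreAux.resid_self_pos D hpos hiP hsub3
  have hCpos : 0 < C := by
    rw [hCdef, hrK]; exact ScoreAux.resid_self_pos D hpos hkP hsub2
  have hquad : ∀ s : ℝ, (1/(n:ℝ)) * ∑ t, (rK t - s * rA t)^2 = C - 2*s*B + s^2*A := by
    intro s
    rw [ScoreAux.quad rK rA s, ← hAdef, ← hBdef, ← hCdef]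
  set c1 : ℝ := C - B^2/A with hc1def
  have hc1pos : 0 < c1 := by
    have h := ScoreAux.resid_two_pos D hpos hiP hkP (Ne.symm hik) hsub4 (B/A)
    rw [← hrK, ← hrA, hquad (B/A)] at h
    have e5 : C - 2*(B/A)*B + (B/A)^2*A = c1 := by
      rw [hc1def]; field_simp; ring
    rwa [e5] at h
  -- minimality and attainment for parent set `H.pa k`
  have hminP : ∀ β : Fin p → ℝ,
      C ≤ (1/(n:ℝ)) * ∑ t, (D t k - ∑ j ∈ H.pa k, β j * D t j)^2 := by
    intro β
    have e2 := ScoreAux.min_rss hn D (H.pa k) hM (fun t => D t k) β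
    have e0 : C = (1/(n:ℝ)) * ∑ t, rK t^2 := by
      rw [hCdef]
      exact congrArg (fun X => (1/(n:ℝ)) * X) (Finset.sum_congr rfl fun t _ => by ring)
    rw [e0, hrK]
    exact mul_le_mul_of_nonneg_left e2 (by positivity)
  have hachP : ∃ β : Fin p → ℝ,
      (1/(n:ℝ)) * ∑ t, (D t k - ∑ j ∈ H.pa k, β j * D t j)^2 = C := by
    refine ⟨ScoreAux.extC (H.pa k) (ScoreAux.coefZ D (H.pa k) (fun t => D t k)), ?_⟩
    have e1 : ∀ t, D t k
        - ∑ j ∈ H.pa k, ScoreAux.extC (H.pa k)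
            (ScoreAux.coefZ D (H.pa k) (fun t => D t k)) j * D t j = rK t := by
      intro t
      rw [hrK]
      exact (ScoreAux.residZ_eq D (H.pa k) (fun t => D t k) t).symm
    calc (1/(n:ℝ)) * ∑ t, (D t k - ∑ j ∈ H.pa k, ScoreAux.extC (H.pa k)
            (ScoreAux.coefZ D (H.pa k) (fun t => D t k)) j * D t j)^2
        = (1/(n:ℝ)) * ∑ t, rK t * rK t :=
          congrArg (fun X => (1/(n:ℝ)) * X)
            (Finset.sum_congr rfl fun t _ => by rw [e1 t]; ring)
      _ = C := hCdef.symm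
  -- minimality and attainment for parent set `insert i (H.pa k)`
  have hmin1 : ∀ β : Fin p → ℝ,
      c1 ≤ (1/(n:ℝ)) * ∑ t, (D t k - ∑ j ∈ insert i (H.pa k), β j * D t j)^2 := by
    intro β
    have e1 : ∀ t, D t k - ∑ j ∈ insert i (H.pa k), β j * D t j
        = (D t k - β i * D t i) - ∑ j ∈ H.pa k, β j * D t j := by
      intro t; rw [Finset.sum_insert hiP]; ring
    have e2 := ScoreAux.min_rss hn D (H.pa k) hM (fun t => D t k - β i * D t i) β
    have e3 : ∀ t, ScoreAux.residZ D (H.pa k) (fun t => D t k - β i * D t i) t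
        = rK t - β i * rA t := by
      intro t
      rw [ScoreAux.residZ_sub D (H.pa k) (β i) i k t, ← hrK, ← hrA]
    calc c1 ≤ C - 2*(β i)*B + (β i)^2*A := by
          have h9 : (C - 2*(β i)*B + (β i)^2*A) - (C - B^2/A) = (A*(β i) - B)^2 / A := by
            field_simp
            ring
          have h10 : 0 ≤ (A*(β i) - B)^2/A := div_nonneg (sq_nonneg _) hApos.le
          rw [hc1def]
          linarith
      _ = (1/(n:ℝ)) * ∑ t, (rK t - (β i) * rA t)^2 := (hquad (β i)).symm
      _ = (1/(n:ℝ)) * ∑ t,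
            ScoreAux.residZ D (H.pa k) (fun t => D t k - β i * D t i) t^2 :=
          congrArg (fun X => (1/(n:ℝ)) * X)
            (Finset.sum_congr rfl fun t _ => by rw [e3 t])
      _ ≤ (1/(n:ℝ)) * ∑ t, ((D t k - β i * D t i) - ∑ j ∈ H.pa k, β j * D t j)^2 :=
          mul_le_mul_of_nonneg_left e2 (by positivity)
      _ = (1/(n:ℝ)) * ∑ t, (D t k - ∑ j ∈ insert i (H.pa k), β j * D t j)^2 :=
          congrArg (fun X => (1/(n:ℝ)) * X)
            (Finset.sum_congr rfl fun t _ => by rw [e1 t])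
  have hach1 : ∃ β : Fin p → ℝ,
      (1/(n:ℝ)) * ∑ t, (D t k - ∑ j ∈ insert i (H.pa k), β j * D t j)^2 = c1 := by
    set s0 : ℝ := B/A with hs0
    set βh : Fin p → ℝ := fun j => if j = i then s0
      else ScoreAux.extC (H.pa k)
        (ScoreAux.coefZ D (H.pa k) (fun t => D t k - s0 * D t i)) j with hβh
    refine ⟨βh, ?_⟩
    have e1 : ∀ t, D t k - ∑ j ∈ insert i (H.pa k), βh j * D t j = rK t - s0 * rA t := by
      intro t
      rw [Finset.sum_insert hiP]
      have e2 : βh i = s0 := by simp [hβh]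
      have e3 : ∑ j ∈ H.pa k, βh j * D t j
          = ∑ j ∈ H.pa k, ScoreAux.extC (H.pa k)
              (ScoreAux.coefZ D (H.pa k) (fun t => D t k - s0 * D t i)) j * D t j := by
        refine Finset.sum_congr rfl fun j hj => ?_
        have : βh j = ScoreAux.extC (H.pa k)
            (ScoreAux.coefZ D (H.pa k) (fun t => D t k - s0 * D t i)) j := by
          simp only [hβh]
          rw [if_neg (show ¬ j = i from fun h => hiP (h ▸ hj))]
        rw [this]
      rw [e2, e3]
      have e4 := ScoreAux.residZ_sub D (H.pa k) s0 i k t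
      rw [← hrK, ← hrA] at e4
      calc D t k - (s0 * D t i + ∑ j ∈ H.pa k, ScoreAux.extC (H.pa k)
              (ScoreAux.coefZ D (H.pa k) (fun t => D t k - s0 * D t i)) j * D t j)
          = (D t k - s0 * D t i) - ∑ j ∈ H.pa k, ScoreAux.extC (H.pa k)
              (ScoreAux.coefZ D (H.pa k) (fun t => D t k - s0 * D t i)) j * D t j := by
            ring
        _ = ScoreAux.residZ D (H.pa k) (fun t => D t k - s0 * D t i) t :=
            (ScoreAux.residZ_eq D (H.pa k) (fun t => D t k - s0 * D t i) t).symm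
        _ = rK t - s0 * rA t := e4
    calc (1/(n:ℝ)) * ∑ t, (D t k - ∑ j ∈ insert i (H.pa k), βh j * D t j)^2
        = (1/(n:ℝ)) * ∑ t, (rK t - s0 * rA t)^2 :=
          congrArg (fun X => (1/(n:ℝ)) * X)
            (Finset.sum_congr rfl fun t _ => by rw [e1 t])
      _ = C - 2*s0*B + s0^2*A := hquad s0
      _ = c1 := by rw [hc1def, hs0]; field_simp; ring
  -- evaluate the two node likelihoods
  have hnode0 : nodeMaxLL D k (H.pa k) = -(1/2) * (Real.log (2*Real.pi*C) + 1) :=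
    ScoreAux.nodeMaxLL_eq hn D k (H.pa k) C hCpos hminP hachP
  have hnode1 : nodeMaxLL D k (insert i (H.pa k))
      = -(1/2) * (Real.log (2*Real.pi*c1) + 1) :=
    ScoreAux.nodeMaxLL_eq hn D k (insert i (H.pa k)) c1 hc1pos hmin1 hach1
  -- assemble the score difference
  have hsum : (∑ j, nodeMaxLL D j (H.pa j)) - (∑ j, nodeMaxLL D j (H'.pa j))
      = nodeMaxLL D k (H.pa k) - nodeMaxLL D k (H'.pa k) := by
    rw [← Finset.sum_sub_distrib]
    exact Finset.sum_eq_single k (fun j _ hj => by rw [hpaother j hj, sub_self])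
      (fun h => absurd (Finset.mem_univ k) h)
  have hscore : score lam H' D - score lam H D
      = (nodeMaxLL D k (H.pa k) - nodeMaxLL D k (H'.pa k)) + lam := by
    simp only [score]
    rw [hcount]
    push_cast
    linear_combination hsum
  rw [hscore, hpa', hnode0, hnode1]
  have hr : parcor (sampleCov n p D) (H.pa k) i k = B / Real.sqrt (A * C) := by
    rw [parcor, ← hB, ← hA, ← hC]
  have hACpos : 0 < A*C := mul_pos hApos hCpos
  have hr2 : parcor (sampleCov n p D) (H.pa k) i k ^ 2 = B^2/(A*C) := by
    rw [hr, div_pow, Real.sq_sqrt hACpos.le]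
  have h1r : 1 - parcor (sampleCov n p D) (H.pa k) i k ^ 2 = c1 / C := by
    rw [hr2, hc1def]
    field_simp
  rw [h1r, Real.log_div hc1pos.ne' hCpos.ne']
  have hl1 : Real.log (2*Real.pi*c1) = Real.log (2*Real.pi) + Real.log c1 :=
    Real.log_mul (by positivity) hc1pos.ne'
  have hl2 : Real.log (2*Real.pi*C) = Real.log (2*Real.pi) + Real.log C :=
    Real.log_mul (by positivity) hCpos.ne'
  rw [hl1, hl2]
  ring
end
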